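/- arXiv:2311.09667 — 4 statements merged into one kernel-verified Lean document; each statement's English description precedes it below -/
import Mathlib

section
/- The support of a pattern in a sequence database is anti-monotone with respect to contiguous sub-patterns: if q is a contiguous sub-pattern of p, then sup(q, D) ≥ sup(p, D), where D is a finite list of sequences and sup(p, D) is the sum over sequences s in D of sup(p, s). -/
/-- `IsOcc s p l` : `l` is an occurrence of pattern `p` in sequence `s`:
a strictly increasing list of indices into `s`, of the same length as `p`,
with coordinatewise containment of the pattern itemsets. -/
def IsOcc (s p : List (Finset ℕ)) (l : List ℕ) : Prop :=
  l.length = p.length ∧ l.Chain' (· < ·) ∧ (∀ x ∈ l, x < s.length) ∧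
  ∀ k, k < p.length → p.getD k ∅ ⊆ s.getD (l.getD k 0) ∅

/-- Two occurrences are nonoverlapping iff they differ at every coordinate. -/
def NonOverlap (l l' : List ℕ) : Prop :=
  ∀ k, k < l.length → l.getD k 0 ≠ l'.getD k 0

/-- `supp s p` : the maximum cardinality of a family of pairwise
nonoverlapping occurrences of `p` in `s`. -/
noncomputable def supp (s p : List (Finset ℕ)) : ℕ :=
  sSup {k | ∃ F : Finset (List ℕ), F.card = k ∧ (∀ l ∈ F, IsOcc s p l) ∧
    (F : Set (List ℕ)).Pairwise NonOverlap}

/-- Support of a pattern in a database: sum of supports over the sequences. -/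
noncomputable def suppD (D : List (List (Finset ℕ))) (p : List (Finset ℕ)) : ℕ :=
  (D.map (fun s => supp s p)).sum

lemma occ_len_pos {s q : List (Finset ℕ)} {l : List ℕ} (hq : q ≠ [])
    (h : IsOcc s q l) : 0 < l.length := by
  rw [h.1]; exact List.length_pos_iff.mpr hq

lemma supp_bdd (s q : List (Finset ℕ)) (hq : q ≠ []) :
    BddAbove {k | ∃ F : Finset (List ℕ), F.card = k ∧ (∀ l ∈ F, IsOcc s q l) ∧
      (F : Set (List ℕ)).Pairwise NonOverlap} := by
  refine ⟨s.length, fun k hk => ?_⟩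
  obtain ⟨F, rfl, hocc, hpw⟩ := hk
  have hinj : Set.InjOn (fun l : List ℕ => l.getD 0 0) (F : Set (List ℕ)) := by
    intro l hl l' hl' h
    by_contra hne
    exact hpw hl hl' hne 0 (occ_len_pos hq (hocc l hl)) h
  calc F.card = (F.image (fun l => l.getD 0 0)).card :=
        (Finset.card_image_of_injOn hinj).symm
    _ ≤ (Finset.range s.length).card := by
        apply Finset.card_le_card
        intro x hx
        simp only [Finset.mem_image] at hx
        obtain ⟨l, hl, rfl⟩ := hx
        have hpos := occ_len_pos hq (hocc l hl)
        rw [Finset.mem_range]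
        refine (hocc l hl).2.2.1 _ ?_
        rw [List.getD_eq_getElem _ _ hpos]
        exact List.getElem_mem _
    _ = s.length := Finset.card_range _

lemma supp_mono (s p q : List (Finset ℕ)) (hq : q ≠ []) (hsub : q <:+: p) :
    supp s p ≤ supp s q := by
  obtain ⟨a, b, rfl⟩ := hsub
  set g : List ℕ → List ℕ := fun l => (l.drop a.length).take q.length with hg
  have hne : {k | ∃ F : Finset (List ℕ), F.card = k ∧
      (∀ l ∈ F, IsOcc s (a ++ q ++ b) l) ∧
      (F : Set (List ℕ)).Pairwise NonOverlap}.Nonempty := by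
    exact ⟨0, ∅, by simp, by simp, by simp⟩
  apply csSup_le hne
  intro k hk
  obtain ⟨F, rfl, hocc, hpw⟩ := hk
  -- basic length facts
  have hqpos : 0 < q.length := List.length_pos_iff.mpr hq
  have hlenl : ∀ l ∈ F, l.length = a.length + q.length + b.length := by
    intro l hl
    have := (hocc l hl).1
    simpa [List.length_append, Nat.add_assoc] using this
  have hglen : ∀ l ∈ F, (g l).length = q.length := by
    intro l hl
    simp only [hg, List.length_take, List.length_drop, hlenl l hl]
    omega
  have hgget : ∀ l ∈ F, ∀ j, j < q.length →
      (g l).getD j 0 = l.getD (a.length + j) 0 := by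
    intro l hl j hj
    have h1 : j < (g l).length := by rw [hglen l hl]; exact hj
    have h2 : a.length + j < l.length := by rw [hlenl l hl]; omega
    rw [List.getD_eq_getElem _ _ h1, List.getD_eq_getElem _ _ h2]
    simp only [hg]
    rw [List.getElem_take, List.getElem_drop]
  have hgsub : ∀ l : List ℕ, List.Sublist (g l) l := fun l =>
    ((List.take_sublist _ _).trans (List.drop_sublist _ _))
  have hqget : ∀ j, j < q.length →
      q.getD j ∅ = (a ++ q ++ b).getD (a.length + j) ∅ := by
    intro j hj
    have h1 : a.length + j < (a ++ q ++ b).length := by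
      simp [List.length_append]; omega
    have h2 : a.length + j < (a ++ q).length := by
      simp [List.length_append]; omega
    rw [List.getD_eq_getElem _ _ hj, List.getD_eq_getElem _ _ h1]
    rw [List.getElem_append_left h2, List.getElem_append_right (by omega)]
    congr 1
    omega
  have hgocc : ∀ l ∈ F, IsOcc s q (g l) := by
    intro l hl
    obtain ⟨hlen, hch, hlt, hcon⟩ := hocc l hl
    refine ⟨hglen l hl, hch.sublist (hgsub l), fun x hx => hlt x ((hgsub l).mem hx), ?_⟩
    intro j hj
    rw [hgget l hl j hj, hqget j hj]
    exact hcon (a.length + j) (by simp [List.length_append]; omega)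
  have hgno : ∀ l ∈ F, ∀ l' ∈ F, l ≠ l' → NonOverlap (g l) (g l') := by
    intro l hl l' hl' hne j hj
    rw [hglen l hl] at hj
    rw [hgget l hl j hj, hgget l' hl' j hj]
    exact hpw hl hl' hne (a.length + j) (by rw [hlenl l hl]; omega)
  have hginj : Set.InjOn g F := by
    intro l hl l' hl' h
    by_contra hne
    exact hgno l hl l' hl' hne 0 (by rw [hglen l hl]; exact hqpos) (by rw [h])
  apply le_csSup (supp_bdd s q hq)
  refine ⟨F.image g, by rw [Finset.card_image_of_injOn hginj], ?_, ?_⟩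
  · intro m hm
    obtain ⟨l, hl, rfl⟩ := Finset.mem_image.mp hm
    exact hgocc l hl
  · intro m hm m' hm' hne
    simp only [Finset.coe_image, Set.mem_image, Finset.mem_coe] at hm hm'
    obtain ⟨l, hl, rfl⟩ := hm
    obtain ⟨l', hl', rfl⟩ := hm'
    exact hgno l hl l' hl' (fun h => hne (by rw [h]))

theorem stmt1 (D : List (List (Finset ℕ))) (p q : List (Finset ℕ))
    (hq : q ≠ []) (hsub : q <:+: p) :
    suppD D p ≤ suppD D q := by
  unfold suppD
  exact List.sum_le_sum fun s _ => supp_mono s p q hq hsub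
end

section
/- If an item i has sup([i], D) < minsup, then every pattern p containing item i in some itemset satisfies sup(p, D) < minsup (pruning of unpromising items is sound). -/
lemma bdd_single (s : List (Finset ℕ)) (i : ℕ) :
    ∀ k ∈ {k | ∃ F : Finset (List ℕ), F.card = k ∧ (∀ l ∈ F, IsOcc s [{i}] l) ∧
      (F : Set (List ℕ)).Pairwise NonOverlap}, k ≤ s.length := by
  rintro k ⟨F, rfl, hocc, _⟩
  have hsub : F ⊆ (Finset.range s.length).image (fun x => [x]) := by
    intro l hl
    obtain ⟨h1, _, h3, _⟩ := hocc l hl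
    obtain ⟨a, rfl⟩ := List.length_eq_one_iff.mp h1
    exact Finset.mem_image.mpr ⟨a, Finset.mem_range.mpr (h3 a (by simp)), rfl⟩
  calc F.card ≤ _ := Finset.card_le_card hsub
    _ ≤ (Finset.range s.length).card := Finset.card_image_le
    _ = s.length := Finset.card_range _

lemma supp_le (s p : List (Finset ℕ)) (i : ℕ) (hp : ∃ v ∈ p, i ∈ v) :
    supp s p ≤ supp s [{i}] := by
  obtain ⟨v, hv, hiv⟩ := hp
  obtain ⟨k, hk, hkv⟩ := List.mem_iff_getElem.mp hv
  have hkd : p.getD k ∅ = v := by rw [List.getD_eq_getElem _ _ hk, hkv]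
  refine csSup_le ⟨0, ∅, by simp⟩ ?_
  rintro n ⟨F, rfl, hocc, hpair⟩
  have hinj : Set.InjOn (fun l : List ℕ => [l.getD k 0]) F := by
    intro l hl l' hl' he
    by_contra hne
    have hlen : (l : List ℕ).length = p.length := (hocc l hl).1
    have := hpair hl hl' hne k (by rw [hlen]; exact hk)
    simp only [List.cons.injEq] at he
    exact this he.1
  refine le_csSup ⟨s.length, bdd_single s i⟩ ⟨F.image (fun l => [l.getD k 0]),
    Finset.card_image_of_injOn hinj, ?_, ?_⟩
  · intro l hl
    obtain ⟨l', hl', rfl⟩ := Finset.mem_image.mp hl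
    obtain ⟨h1, _, h3, h4⟩ := hocc l' hl'
    have hkl : k < l'.length := h1 ▸ hk
    refine ⟨rfl, List.isChain_singleton _, ?_, ?_⟩
    · intro x hx
      simp only [List.mem_singleton] at hx
      subst hx
      exact h3 _ (by rw [List.getD_eq_getElem _ _ hkl]; exact List.getElem_mem _)
    · intro j hj
      obtain rfl : j = 0 := Nat.lt_one_iff.mp (by simpa using hj)
      have := h4 k hk
      rw [hkd] at this
      simpa using this hiv
  · intro a ha b hb hne j hj
    obtain ⟨la, _, rfl⟩ := Finset.mem_image.mp ha
    obtain ⟨lb, _, rfl⟩ := Finset.mem_image.mp hb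
    obtain rfl : j = 0 := Nat.lt_one_iff.mp (by simpa using hj)
    simp only [List.getD_cons_zero]
    intro he
    exact hne (by rw [he])

lemma suppD_le (D : List (List (Finset ℕ))) (p : List (Finset ℕ)) (i : ℕ)
    (hp : ∃ v ∈ p, i ∈ v) : suppD D p ≤ suppD D [{i}] := by
  induction D with
  | nil => simp [suppD]
  | cons s D ih =>
      simp only [suppD, List.map_cons, List.sum_cons] at *
      exact Nat.add_le_add (supp_le s p i hp) ih

theorem stmt2 (D : List (List (Finset ℕ))) (i : ℕ) (minsup : ℕ) (hm : 0 < minsup)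
    (h : suppD D [{i}] < minsup) (p : List (Finset ℕ)) (hp : ∃ v ∈ p, i ∈ v) :
    suppD D p < minsup := by
  exact lt_of_le_of_lt (suppD_le D p i hp) h
end

section
/- Itemset pattern join is complete: every frequent pattern of size m+1 can be written as the join v·p·u of two frequent patterns of size m, namely its prefix pattern v·p and its suffix pattern p·u, where p has size m−1. Formally, if t = t_1 t_2 ... t_{m+1} satisfies sup(t, D) ≥ minsup, then its prefix t_1...t_m and suffix t_2...t_{m+1} both have support at least minsup in D, and t is obtained from them by the itemset pattern join. -/
/-!
Truncating every occurrence of `t` to its first (or last) `m` positions yields an occurrence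
of the prefix (or suffix) pattern, and truncation keeps nonoverlapping occurrences
nonoverlapping, hence distinct. So every family witnessing `sup(t, s)` maps injectively to a
family of the same size for the prefix (suffix), and summing over `D` gives the bounds.
-/

section Occurrences

variable {s p : List (Finset ℕ)} {l l' : List ℕ}

lemma IsOcc.take (hl : IsOcc s p l) (n : ℕ) : IsOcc s (p.take n) (l.take n) := by
  obtain ⟨hlen, hchain, hmem, hsub⟩ := hl
  refine ⟨by simp [hlen], hchain.sublist (List.take_sublist n l),
    fun x hx => hmem x (List.mem_of_mem_take hx), fun k hk => ?_⟩
  simp only [List.length_take, lt_min_iff] at hk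
  simpa [List.getD_eq_getElem?_getD, List.getElem?_take, hk.1] using hsub k hk.2

lemma IsOcc.drop (hl : IsOcc s p l) (n : ℕ) : IsOcc s (p.drop n) (l.drop n) := by
  obtain ⟨hlen, hchain, hmem, hsub⟩ := hl
  refine ⟨by simp [hlen], hchain.sublist (List.drop_sublist n l),
    fun x hx => hmem x (List.mem_of_mem_drop hx), fun k hk => ?_⟩
  simp only [List.length_drop] at hk
  simpa [List.getD_eq_getElem?_getD, List.getElem?_drop] using hsub (n + k) (by omega)

lemma NonOverlap.take (h : NonOverlap l l') (n : ℕ) : NonOverlap (l.take n) (l'.take n) := by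
  intro k hk
  simp only [List.length_take, lt_min_iff] at hk
  simpa [List.getD_eq_getElem?_getD, List.getElem?_take, hk.1] using h k hk.2

lemma NonOverlap.drop (h : NonOverlap l l') (n : ℕ) : NonOverlap (l.drop n) (l'.drop n) := by
  intro k hk
  simp only [List.length_drop] at hk
  simpa [List.getD_eq_getElem?_getD, List.getElem?_drop] using h (n + k) (by omega)

lemma NonOverlap.ne (h : NonOverlap l l') (hl : l ≠ []) : l ≠ l' := by
  rintro rfl
  exact h 0 (List.length_pos_iff.2 hl) rfl

end Occurrences

section Support

variable {s p q : List (Finset ℕ)}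

lemma card_le_supp (hp : p ≠ []) {F : Finset (List ℕ)} (hocc : ∀ l ∈ F, IsOcc s p l)
    (hdisj : (F : Set (List ℕ)).Pairwise NonOverlap) : F.card ≤ supp s p := by
  refine le_csSup ⟨s.length, ?_⟩ ⟨F, rfl, hocc, hdisj⟩
  rintro _ ⟨G, rfl, hGocc, hGdisj⟩
  have hpos : ∀ l ∈ G, 0 < l.length := fun l hl => (hGocc l hl).1 ▸ List.length_pos_iff.2 hp
  have hstart : ∀ l ∈ G, l.getD 0 0 < s.length := fun l hl =>
    (hGocc l hl).2.2.1 _ (List.getD_eq_getElem l 0 (hpos l hl) ▸ List.getElem_mem (hpos l hl))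
  -- distinct nonoverlapping occurrences start at distinct positions of `s`
  calc G.card ≤ (Finset.range s.length).card :=
        Finset.card_le_card_of_injOn (fun l => l.getD 0 0)
          (fun l hl => Finset.mem_range.2 (hstart l hl))
          fun l hl l' hl' heq => by
            by_contra hne
            exact hGdisj hl hl' hne 0 (hpos l hl) heq
    _ = s.length := Finset.card_range _

lemma supp_le_supp_of_map (hq : q ≠ []) (f : List ℕ → List ℕ)
    (hocc : ∀ l, IsOcc s p l → IsOcc s q (f l))
    (hdisj : ∀ l l', NonOverlap l l' → NonOverlap (f l) (f l')) : supp s p ≤ supp s q := by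
  refine csSup_le' ?_
  rintro _ ⟨F, rfl, hFocc, hFdisj⟩
  have hinj : Set.InjOn f F := fun l hl l' hl' heq => by
    by_contra hne
    have hfl : f l ≠ [] :=
      List.ne_nil_of_length_pos ((hocc l (hFocc l hl)).1 ▸ List.length_pos_iff.2 hq)
    exact (hdisj l l' (hFdisj hl hl' hne)).ne hfl heq
  rw [← Finset.card_image_of_injOn hinj]
  refine card_le_supp hq (fun a ha => ?_) fun a ha b hb hab => ?_
  · obtain ⟨l, hl, rfl⟩ := Finset.mem_image.1 ha
    exact hocc l (hFocc l hl)
  · obtain ⟨l, hl, rfl⟩ := Finset.mem_image.1 (Finset.mem_coe.1 ha)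
    obtain ⟨l', hl', rfl⟩ := Finset.mem_image.1 (Finset.mem_coe.1 hb)
    exact hdisj l l' (hFdisj hl hl' fun h => hab (h ▸ rfl))

lemma supp_le_supp_take {n : ℕ} (hn : n ≠ 0) (hp : p ≠ []) : supp s p ≤ supp s (p.take n) :=
  supp_le_supp_of_map (by simp [hn, hp]) (List.take n) (fun _ hl => hl.take n)
    fun _ _ h => h.take n

lemma supp_le_supp_drop {n : ℕ} (hn : n < p.length) : supp s p ≤ supp s (p.drop n) :=
  supp_le_supp_of_map (by simp; omega) (List.drop n) (fun _ hl => hl.drop n)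
    fun _ _ h => h.drop n

lemma suppD_mono (D : List (List (Finset ℕ))) (h : ∀ s, supp s p ≤ supp s q) :
    suppD D p ≤ suppD D q :=
  List.sum_le_sum fun s _ => h s

end Support

theorem stmt4 (D : List (List (Finset ℕ))) (t : List (Finset ℕ)) (minsup : ℕ)
    (ht : 2 ≤ t.length) (h : minsup ≤ suppD D t) :
    minsup ≤ suppD D t.dropLast ∧ minsup ≤ suppD D t.tail ∧
      t = t.dropLast ++ t.drop (t.length - 1) := by
  have ht₀ : t ≠ [] := List.ne_nil_of_length_pos (by omega)
  refine ⟨?_, ?_, ?_⟩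
  · rw [List.dropLast_eq_take]
    exact h.trans (suppD_mono D fun s => supp_le_supp_take (by omega) ht₀)
  · rw [← List.drop_one]
    exact h.trans (suppD_mono D fun s => supp_le_supp_drop (by omega))
  · rw [List.dropLast_eq_take, List.take_append_drop]
end

section
/- Greedy matching computes the nonoverlapping support for two-level patterns: given a strictly increasing list A = [i_1 < i_2 < ... < i_a] (occurrence positions of a prefix pattern q in s) and a strictly increasing list B = [j_1 < ... < j_b] (positions of the last itemset e in s), the greedy procedure that, scanning A in increasing order and for each i_k selecting the smallest unused element j of B with j > i_k, produces a maximum-size family of pairs (i, j) with i ∈ A, j ∈ B, i < j, such that all selected i's are distinct and all selected j's are distinct. -/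
/-- Greedy matching: scan `A` in order; match each element to the smallest
not-yet-used element of `B` exceeding it (for sorted `B`, `find?` returns
the smallest such element). -/
def greedyMatch : List ℕ → List ℕ → List (ℕ × ℕ)
  | [], _ => []
  | i :: A, B =>
    match B.find? (fun j => decide (i < j)) with
    | none => greedyMatch A B
    | some j => (i, j) :: greedyMatch A (B.erase j)

/-- A matching between `A` and `B`: pairs `(i, j)` with `i ∈ A`, `j ∈ B`,
`i < j`, with all first coordinates distinct and all second coordinates distinct. -/
def IsMatching (A B : List ℕ) (M : Finset (ℕ × ℕ)) : Prop :=
  (∀ q ∈ M, q.1 ∈ A ∧ q.2 ∈ B ∧ q.1 < q.2) ∧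
  Set.InjOn Prod.fst (M : Set (ℕ × ℕ)) ∧ Set.InjOn Prod.snd (M : Set (ℕ × ℕ))

/-!
Greedy is optimal by an exchange argument. Let `j` be the smallest element of `B` above the first
element `i` of `A`. Any matching `M` can be turned into a matching of the rest of `A` with `B`
minus `j`, losing at most one pair: if `i` is matched to some `k`, then `j ≤ k`, and swapping the
roles of `j` and `k` in `M` keeps it a matching and pairs `i` with `j`, which is then removed;
if `i` is unmatched, only the pair using `j` (if any) is removed. Induction on `A` concludes.
-/

lemma le_of_find?_eq_some {i j : ℕ} {B : List ℕ} (hB : B.Pairwise (· < ·))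
    (hj : B.find? (fun b => decide (i < b)) = some j) {b : ℕ} (hb : b ∈ B) (hib : i < b) :
    j ≤ b := by
  obtain ⟨-, as, bs, rfl, has⟩ := List.find?_eq_some_iff_append.1 hj
  rcases List.mem_append.1 hb with hb | hb
  · simpa [hib] using has b hb
  · rcases List.mem_cons.1 hb with rfl | hb
    · exact le_rfl
    · exact (List.rel_of_pairwise_cons (List.pairwise_append.1 hB).2.1 hb).le

lemma mem_greedyMatch {A B : List ℕ} {p : ℕ × ℕ} (hp : p ∈ greedyMatch A B) :
    p.1 ∈ A ∧ p.2 ∈ B ∧ p.1 < p.2 := by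
  induction A generalizing B with
  | nil => simp [greedyMatch] at hp
  | cons i A ih =>
    cases hf : B.find? (fun b => decide (i < b)) with
    | none =>
      simp only [greedyMatch, hf] at hp
      obtain ⟨h1, h2, h3⟩ := ih hp
      exact ⟨List.mem_cons_of_mem _ h1, h2, h3⟩
    | some j =>
      simp only [greedyMatch, hf, List.mem_cons] at hp
      rcases hp with rfl | hp
      · exact ⟨List.mem_cons_self, List.mem_of_find?_eq_some hf,
          by simpa using List.find?_some hf⟩
      · obtain ⟨h1, h2, h3⟩ := ih hp
        exact ⟨List.mem_cons_of_mem _ h1, List.erase_sublist.mem h2, h3⟩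

lemma nodup_map_fst_greedyMatch {A : List ℕ} (hA : A.Nodup) (B : List ℕ) :
    ((greedyMatch A B).map Prod.fst).Nodup := by
  induction A generalizing B with
  | nil => simp [greedyMatch]
  | cons i A ih =>
    rw [List.nodup_cons] at hA
    cases hf : B.find? (fun b => decide (i < b)) with
    | none => simpa only [greedyMatch, hf] using ih hA.2 B
    | some j =>
      simp only [greedyMatch, hf, List.map_cons, List.nodup_cons, List.mem_map]
      exact ⟨fun ⟨p, hp, hpi⟩ => hA.1 (hpi ▸ (mem_greedyMatch hp).1), ih hA.2 _⟩

lemma nodup_map_snd_greedyMatch (A : List ℕ) {B : List ℕ} (hB : B.Nodup) :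
    ((greedyMatch A B).map Prod.snd).Nodup := by
  induction A generalizing B with
  | nil => simp [greedyMatch]
  | cons i A ih =>
    cases hf : B.find? (fun b => decide (i < b)) with
    | none => simpa only [greedyMatch, hf] using ih hB
    | some j =>
      simp only [greedyMatch, hf, List.map_cons, List.nodup_cons, List.mem_map]
      refine ⟨fun ⟨p, hp, hpj⟩ => ?_, ih (hB.sublist List.erase_sublist)⟩
      exact ((hB.mem_erase_iff).1 (hpj ▸ (mem_greedyMatch hp).2.1)).1 rfl

lemma isMatching_greedyMatch {A B : List ℕ} (hA : A.Nodup) (hB : B.Nodup) :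
    IsMatching A B (greedyMatch A B).toFinset := by
  refine ⟨fun q hq => mem_greedyMatch (List.mem_toFinset.1 hq), ?_, ?_⟩ <;>
    intro x hx y hy hxy <;> rw [Finset.mem_coe, List.mem_toFinset] at hx hy
  · exact List.inj_on_of_nodup_map (nodup_map_fst_greedyMatch hA B) hx hy hxy
  · exact List.inj_on_of_nodup_map (nodup_map_snd_greedyMatch A hB) hx hy hxy

namespace IsMatching

variable {A B : List ℕ} {M : Finset (ℕ × ℕ)}

lemma eq_empty_of_nil (hM : IsMatching [] B M) : M = ∅ :=
  Finset.eq_empty_of_forall_notMem fun q hq => by simpa using (hM.1 q hq).1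

lemma of_cons_of_forall_fst_ne {i : ℕ} (hM : IsMatching (i :: A) B M)
    (hi : ∀ q ∈ M, q.1 ≠ i) : IsMatching A B M := by
  refine ⟨fun q hq => ?_, hM.2⟩
  obtain ⟨h1, h2, h3⟩ := hM.1 q hq
  exact ⟨(List.mem_cons.1 h1).resolve_left (hi q hq), h2, h3⟩

lemma filter_snd_ne (hM : IsMatching A B M) (j : ℕ) :
    IsMatching A (B.erase j) (M.filter (·.2 ≠ j)) := by
  have hsub : ((M.filter (·.2 ≠ j) : Finset _) : Set (ℕ × ℕ)) ⊆ M :=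
    Finset.coe_subset.2 (Finset.filter_subset _ _)
  refine ⟨fun q hq => ?_, hM.2.1.mono hsub, hM.2.2.mono hsub⟩
  obtain ⟨hqM, hqj⟩ := Finset.mem_filter.1 hq
  obtain ⟨h1, h2, h3⟩ := hM.1 q hqM
  exact ⟨h1, (List.mem_erase_of_ne hqj).2 h2, h3⟩

lemma card_le_card_filter_snd_ne_add_one (hM : IsMatching A B M) (j : ℕ) :
    M.card ≤ (M.filter (·.2 ≠ j)).card + 1 := by
  have hj : (M.filter (¬ ·.2 ≠ j)).card ≤ 1 :=
    Finset.card_le_one.2 fun p hp q hq => by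
      simp only [Finset.mem_filter, not_not] at hp hq
      exact hM.2.2 hp.1 hq.1 (hp.2.trans hq.2.symm)
  have := Finset.card_filter_add_card_filter_not (s := M) (·.2 ≠ j)
  omega

lemma erase_of_mem {i j : ℕ} (hM : IsMatching (i :: A) B M) (hij : (i, j) ∈ M) :
    IsMatching A (B.erase j) (M.erase (i, j)) := by
  have hsub : ((M.erase (i, j) : Finset _) : Set (ℕ × ℕ)) ⊆ M :=
    Finset.coe_subset.2 (Finset.erase_subset _ _)
  refine ⟨fun q hq => ?_, hM.2.1.mono hsub, hM.2.2.mono hsub⟩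
  obtain ⟨hqij, hqM⟩ := Finset.mem_erase.1 hq
  obtain ⟨h1, h2, h3⟩ := hM.1 q hqM
  have hqi : q.1 ≠ i := fun h => hqij (hM.2.1 hqM hij h)
  have hqj : q.2 ≠ j := fun h => hqij (hM.2.2 hqM hij h)
  exact ⟨(List.mem_cons.1 h1).resolve_left hqi, (List.mem_erase_of_ne hqj).2 h2, h3⟩

lemma image_swap_snd {i j k : ℕ} (hM : IsMatching A B M) (hik : (i, k) ∈ M) (hj : j ∈ B)
    (hij : i < j) (hjk : j ≤ k) :
    IsMatching A B (M.image (Prod.map id (Equiv.swap j k))) := by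
  simp only [IsMatching, Finset.coe_image]
  refine ⟨?_, ?_, ?_⟩
  · simp only [Finset.mem_image]
    rintro _ ⟨⟨a, b⟩, hab, rfl⟩
    obtain ⟨ha, hb, hlt⟩ := hM.1 _ hab
    simp only [Prod.map_fst, Prod.map_snd, id_eq, Equiv.swap_apply_def] at hlt ⊢
    refine ⟨ha, ?_⟩
    split_ifs with hbj hbk
    · exact ⟨(hM.1 _ hik).2.1, by omega⟩
    · obtain rfl : a = i := congrArg Prod.fst (hM.2.2 hab hik hbk)
      exact ⟨hj, hij⟩
    · exact ⟨hb, hlt⟩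
  · rintro _ ⟨p, hp, rfl⟩ _ ⟨q, hq, rfl⟩ h
    rw [hM.2.1 hp hq h]
  · rintro _ ⟨p, hp, rfl⟩ _ ⟨q, hq, rfl⟩ h
    rw [hM.2.2 hp hq ((Equiv.swap j k).injective h)]

lemma exists_isMatching_erase_add_one {i j : ℕ} (hM : IsMatching (i :: A) B M) (hj : j ∈ B)
    (hij : i < j) (hmin : ∀ b ∈ B, i < b → j ≤ b) :
    ∃ N, IsMatching A (B.erase j) N ∧ M.card ≤ N.card + 1 := by
  by_cases hi : ∃ k, (i, k) ∈ M
  · obtain ⟨k, hik⟩ := hi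
    obtain ⟨-, hk, hik'⟩ := hM.1 _ hik
    have hinj : Function.Injective (Prod.map (id : ℕ → ℕ) (Equiv.swap j k)) :=
      Function.injective_id.prodMap (Equiv.injective _)
    have hmem : (i, j) ∈ M.image (Prod.map id (Equiv.swap j k)) :=
      Finset.mem_image.2 ⟨(i, k), hik, by simp⟩
    refine ⟨_, (hM.image_swap_snd hik hj hij (hmin k hk hik')).erase_of_mem hmem, ?_⟩
    rw [Finset.card_erase_of_mem hmem, Finset.card_image_of_injective _ hinj]
    omega
  · simp only [not_exists] at hi
    have hM' := hM.of_cons_of_forall_fst_ne fun q hq hqi => hi q.2 (hqi ▸ hq)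
    exact ⟨_, hM'.filter_snd_ne j, hM'.card_le_card_filter_snd_ne_add_one j⟩

theorem card_le_length_greedyMatch (hB : B.Pairwise (· < ·)) (hM : IsMatching A B M) :
    M.card ≤ (greedyMatch A B).length := by
  induction A generalizing B M with
  | nil => simp [hM.eq_empty_of_nil]
  | cons i A ih =>
    cases hf : B.find? (fun b => decide (i < b)) with
    | none =>
      simp only [greedyMatch, hf]
      refine ih hB (hM.of_cons_of_forall_fst_ne fun q hq hqi => ?_)
      obtain ⟨-, hq2, hlt⟩ := hM.1 q hq
      exact List.find?_eq_none.1 hf q.2 hq2 (by simpa [← hqi] using hlt)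
    | some j =>
      simp only [greedyMatch, hf, List.length_cons]
      obtain ⟨N, hN, hcard⟩ := hM.exists_isMatching_erase_add_one (List.mem_of_find?_eq_some hf)
        (by simpa using List.find?_some hf) fun b hb hib => le_of_find?_eq_some hB hf hb hib
      have := ih (hB.sublist List.erase_sublist) hN
      omega

end IsMatching

theorem stmt7 (A B : List ℕ) (hA : A.Pairwise (· < ·)) (hB : B.Pairwise (· < ·)) :
    (greedyMatch A B).Nodup ∧
    IsMatching A B (greedyMatch A B).toFinset ∧
    ∀ M : Finset (ℕ × ℕ), IsMatching A B M → M.card ≤ (greedyMatch A B).length :=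
  ⟨(nodup_map_fst_greedyMatch hA.nodup B).of_map _, isMatching_greedyMatch hA.nodup hB.nodup,
    fun _ hM => hM.card_le_length_greedyMatch hB⟩
end
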